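/- arXiv:2105.13438 — 2 statements merged into one kernel-verified Lean document; each statement's English description precedes it below -/
import Mathlib

section
/- If G is an efficient closed domination graph with no isolated vertex, then ∂_{2p}(G) ≥ n(G) - 2ρ(G). -/
/-
An efficient closed dominating set `S` is a 2-packing whose external neighbourhood is the whole
complement of `S`, so its differential is `n - 2|S| ≥ n - 2ρ`, and it is one of the sets over
which `∂_{2p}` maximises.
-/

open Finset

variable {V : Type*}

/-- `S` is a 2-packing: closed neighbourhoods of distinct vertices of `S` are disjoint. -/
def IsPacking2 (G : SimpleGraph V) (S : Finset V) : Prop :=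
  (S : Set V).Pairwise fun u v =>
    Disjoint (G.neighborSet u ∪ {u}) (G.neighborSet v ∪ {v})

/-- The external neighbourhood of `S`: vertices outside `S` with a neighbour in `S`. -/
def extN (G : SimpleGraph V) [Fintype V] [DecidableEq V] [DecidableRel G.Adj]
    (S : Finset V) : Finset V :=
  Finset.univ.filter fun v => v ∉ S ∧ ∃ u ∈ S, G.Adj u v

/-- The differential of a set `S`: `|N_e(S)| - |S|`. -/
def diffSet (G : SimpleGraph V) [Fintype V] [DecidableEq V] [DecidableRel G.Adj]
    (S : Finset V) : ℤ :=
  ((extN G S).card : ℤ) - S.card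

/-- The 2-packing differential of `G`. -/
noncomputable def pdiff2 (G : SimpleGraph V) [Fintype V] [DecidableEq V]
    [DecidableRel G.Adj] : ℤ :=
  sSup {d : ℤ | ∃ S : Finset V, IsPacking2 G S ∧ d = diffSet G S}

/-- The packing number of `G`: maximum cardinality of a 2-packing. -/
noncomputable def packNum (G : SimpleGraph V) [Fintype V] : ℕ :=
  sSup {n : ℕ | ∃ S : Finset V, IsPacking2 G S ∧ n = S.card}

/-- `G` has no isolated vertex. -/
def NoIsolated (G : SimpleGraph V) : Prop := ∀ v : V, ∃ u, G.Adj v u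

/-- `S` is a dominating set of `G`. -/
def IsDom (G : SimpleGraph V) (S : Finset V) : Prop :=
  ∀ v, v ∉ S → ∃ u ∈ S, G.Adj u v

theorem extN_eq_compl_of_isDom {G : SimpleGraph V} [Fintype V] [DecidableEq V]
    [DecidableRel G.Adj] {S : Finset V} (hD : IsDom G S) : extN G S = Sᶜ := by
  ext v
  simp only [extN, mem_filter, mem_univ, true_and, mem_compl]
  exact ⟨And.left, fun hv => ⟨hv, hD v hv⟩⟩

theorem diffSet_of_isDom {G : SimpleGraph V} [Fintype V] [DecidableEq V]
    [DecidableRel G.Adj] {S : Finset V} (hD : IsDom G S) :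
    diffSet G S = (Fintype.card V : ℤ) - 2 * S.card := by
  rw [diffSet, extN_eq_compl_of_isDom hD, card_compl, Nat.cast_sub (card_le_univ S)]
  ring

theorem diffSet_le_card (G : SimpleGraph V) [Fintype V] [DecidableEq V]
    [DecidableRel G.Adj] (S : Finset V) : diffSet G S ≤ Fintype.card V := by
  have := card_le_univ (extN G S)
  rw [diffSet]
  omega

theorem card_le_packNum {G : SimpleGraph V} [Fintype V] {S : Finset V}
    (hS : IsPacking2 G S) : S.card ≤ packNum G :=
  le_csSup ⟨Fintype.card V, fun _ ⟨T, _, hn⟩ => hn ▸ card_le_univ T⟩ ⟨S, hS, rfl⟩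

theorem diffSet_le_pdiff2 {G : SimpleGraph V} [Fintype V] [DecidableEq V]
    [DecidableRel G.Adj] {S : Finset V} (hS : IsPacking2 G S) : diffSet G S ≤ pdiff2 G :=
  le_csSup ⟨Fintype.card V, fun _ ⟨T, _, hd⟩ => hd ▸ diffSet_le_card G T⟩ ⟨S, hS, rfl⟩

theorem stmt8_general {V : Type*} [Fintype V] [DecidableEq V] (G : SimpleGraph V)
    [DecidableRel G.Adj]
    (heff : ∃ S : Finset V, IsPacking2 G S ∧ IsDom G S) :
    (Fintype.card V : ℤ) - 2 * packNum G ≤ pdiff2 G := by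
  obtain ⟨S, hP, hD⟩ := heff
  have hpack : (S.card : ℤ) ≤ packNum G := by exact_mod_cast card_le_packNum hP
  calc (Fintype.card V : ℤ) - 2 * packNum G ≤ Fintype.card V - 2 * S.card := by linarith
    _ = diffSet G S := (diffSet_of_isDom hD).symm
    _ ≤ pdiff2 G := diffSet_le_pdiff2 hP

theorem stmt8 {V : Type*} [Fintype V] [DecidableEq V] (G : SimpleGraph V)
    [DecidableRel G.Adj] (h : NoIsolated G)
    (heff : ∃ S : Finset V, IsPacking2 G S ∧ IsDom G S) :
    (Fintype.card V : ℤ) - 2 * packNum G ≤ pdiff2 G :=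
  stmt8_general G heff
end

section
/- If G is an efficient closed domination graph with no isolated vertex and there exists a maximum 2-packing S such that every vertex outside S has degree δ(G), then ∂_{2p}(G) = n(G) - 2ρ(G). -/
/-!
For a 2-packing `S` the closed neighbourhoods of its vertices are disjoint, so its differential
is `∑_{u ∈ S} deg u - |S|`. An efficient dominating set `D` is a maximum 2-packing whose
external neighbourhood is everything else, so it attains `n - 2ρ`. Conversely, trading a
2-packing `S` for the maximum 2-packing `S₀` adds at least `δ` per vertex of `S₀ \ S` and
removes exactly `δ` per vertex of `S \ S₀` from the degree sum, and `S₀` has at most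
`n - |S₀|` external neighbours; as `δ ≥ 1`, this bounds the differential of `S` by `n - 2ρ`.
-/

open Finset

variable {V : Type*}

theorem Finset.sum_add_card_sdiff_mul_le {α : Type*} [DecidableEq α] {S T : Finset α}
    {f : α → ℕ} {c : ℕ} (hST : ∀ v ∈ S \ T, f v ≤ c) (hTS : ∀ v ∈ T \ S, c ≤ f v) :
    ∑ v ∈ S, f v + #(T \ S) * c ≤ ∑ v ∈ T, f v + #(S \ T) * c := by
  have hS : ∑ v ∈ S \ T, f v ≤ #(S \ T) * c := by simpa using sum_le_card_nsmul _ f c hST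
  have hT : #(T \ S) * c ≤ ∑ v ∈ T \ S, f v := by simpa using card_nsmul_le_sum _ f c hTS
  rw [← sum_inter_add_sum_sdiff S T f, ← sum_inter_add_sum_sdiff T S f, inter_comm T S]
  omega

section Packing

variable {G : SimpleGraph V}

theorem IsPacking2.card_le_of_isDom {S D : Finset V} (hS : IsPacking2 G S) (hD : IsDom G D) :
    #S ≤ #D := by
  have hmeet : ∀ s ∈ S, ∃ d ∈ D, d ∈ G.neighborSet s ∪ {s} := by
    intro s _
    by_cases hs : s ∈ D
    · exact ⟨s, hs, Set.mem_union_right _ rfl⟩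
    · obtain ⟨d, hd, hadj⟩ := hD s hs
      exact ⟨d, hd, Set.mem_union_left _ hadj.symm⟩
  choose! f hfD hfN using hmeet
  refine card_le_card_of_injOn f hfD fun s hs t ht hst => ?_
  by_contra hne
  exact Set.disjoint_left.mp (hS hs ht hne) (hfN s hs) (hst ▸ hfN t ht)

theorem packNum_eq_card_of_isDom [Fintype V] {D : Finset V} (hDp : IsPacking2 G D) (hD : IsDom G D) :
    packNum G = #D :=
  IsGreatest.csSup_eq ⟨⟨D, hDp, rfl⟩, by rintro _ ⟨S, hS, rfl⟩; exact hS.card_le_of_isDom hD⟩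

theorem NoIsolated.one_le_minDegree [Fintype V] [DecidableRel G.Adj] [Nonempty V]
    (h : NoIsolated G) : 1 ≤ G.minDegree :=
  G.le_minDegree_of_forall_le_degree 1 fun v =>
    card_pos.mpr ⟨(h v).choose, (G.mem_neighborFinset _ _).mpr (h v).choose_spec⟩

variable [Fintype V] [DecidableEq V] [DecidableRel G.Adj]

theorem extN_subset_compl (S : Finset V) : extN G S ⊆ Sᶜ := fun _ hv =>
  mem_compl.mpr (mem_filter.mp hv).2.1

theorem card_extN_add_card_le (S : Finset V) : #(extN G S) + #S ≤ Fintype.card V := by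
  rw [← card_add_card_compl S, add_comm #S]
  exact Nat.add_le_add_right (card_le_card (extN_subset_compl S)) _

theorem IsDom.extN_eq_compl {S : Finset V} (hS : IsDom G S) : extN G S = Sᶜ :=
  (extN_subset_compl S).antisymm fun v hv =>
    mem_filter.mpr ⟨mem_univ v, mem_compl.mp hv, hS v (mem_compl.mp hv)⟩

theorem IsDom.diffSet_eq {S : Finset V} (hS : IsDom G S) :
    diffSet G S = (Fintype.card V : ℤ) - 2 * #S := by
  have hcard : #S + #Sᶜ = Fintype.card V := card_add_card_compl S
  rw [diffSet, hS.extN_eq_compl]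
  omega

theorem IsPacking2.extN_eq_biUnion {S : Finset V} (hS : IsPacking2 G S) :
    extN G S = S.biUnion fun u => G.neighborFinset u := by
  ext v
  simp only [extN, mem_filter, mem_univ, true_and, mem_biUnion, SimpleGraph.mem_neighborFinset]
  refine ⟨fun ⟨_, hu⟩ => hu, fun ⟨u, hu, hadj⟩ => ⟨fun hv => ?_, u, hu, hadj⟩⟩
  exact Set.disjoint_left.mp (hS hu hv hadj.ne) (Set.mem_union_left _ hadj)
    (Set.mem_union_right _ rfl)

theorem IsPacking2.card_extN {S : Finset V} (hS : IsPacking2 G S) :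
    #(extN G S) = ∑ u ∈ S, G.degree u := by
  rw [hS.extN_eq_biUnion, card_biUnion]
  · rfl
  intro u hu v hv huv
  rw [Function.onFun, ← disjoint_coe, SimpleGraph.coe_neighborFinset,
    SimpleGraph.coe_neighborFinset]
  exact (hS hu hv huv).mono Set.subset_union_left Set.subset_union_left

theorem IsPacking2.diffSet_le (hG : NoIsolated G) {S S₀ : Finset V} (hS : IsPacking2 G S)
    (hS₀ : IsPacking2 G S₀) (hdeg : ∀ v, v ∉ S₀ → G.degree v = G.minDegree)
    (hcard : #S ≤ #S₀) : diffSet G S ≤ (Fintype.card V : ℤ) - 2 * #S₀ := by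
  have hexch : ∑ v ∈ S, G.degree v + #(S₀ \ S) * G.minDegree
      ≤ ∑ v ∈ S₀, G.degree v + #(S \ S₀) * G.minDegree :=
    sum_add_card_sdiff_mul_le (fun v hv => (hdeg v (mem_sdiff.mp hv).2).le)
      (fun v _ => G.minDegree_le_degree v)
  have hS₀n : ∑ v ∈ S₀, G.degree v + #S₀ ≤ Fintype.card V :=
    hS₀.card_extN ▸ card_extN_add_card_le S₀
  have hsplit : #(S \ S₀) + #S₀ = #(S₀ \ S) + #S := by
    have := card_sdiff_add_card_inter S S₀
    have := card_sdiff_add_card_inter S₀ S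
    rw [inter_comm] at this
    omega
  have hδ : (#S₀ - #S : ℤ) ≤ (#S₀ - #S) * G.minDegree := by
    rcases hcard.lt_or_eq with hlt | heq
    · have : Nonempty V := Finset.Nonempty.to_type (card_pos.mp (hlt.trans_le' (Nat.zero_le _)))
      have := hG.one_le_minDegree
      nlinarith
    · simp [heq]
  rw [diffSet, hS.card_extN]
  push_cast at hexch hS₀n hsplit ⊢
  nlinarith

end Packing

theorem stmt9 {V : Type*} [Fintype V] [DecidableEq V] (G : SimpleGraph V)
    [DecidableRel G.Adj] (h : NoIsolated G)
    (heff : ∃ S : Finset V, IsPacking2 G S ∧ IsDom G S)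
    (hS : ∃ S : Finset V, IsPacking2 G S ∧ S.card = packNum G ∧
      ∀ v, v ∉ S → G.degree v = G.minDegree) :
    pdiff2 G = (Fintype.card V : ℤ) - 2 * packNum G := by
  obtain ⟨D, hDp, hDd⟩ := heff
  obtain ⟨S₀, hS₀p, hS₀card, hS₀deg⟩ := hS
  have hρ : packNum G = #D := packNum_eq_card_of_isDom hDp hDd
  have hS₀D : #S₀ = #D := hS₀card.trans hρ
  have hmax : IsGreatest {d : ℤ | ∃ S : Finset V, IsPacking2 G S ∧ d = diffSet G S}
      ((Fintype.card V : ℤ) - 2 * #D) := by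
    refine ⟨⟨D, hDp, hDd.diffSet_eq.symm⟩, ?_⟩
    rintro _ ⟨S, hSp, rfl⟩
    exact hS₀D ▸ hSp.diffSet_le h hS₀p hS₀deg (hS₀D ▸ hSp.card_le_of_isDom hDd)
  rw [pdiff2, hmax.csSup_eq, hρ]
end
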